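/- arXiv:1710.11285 — 8 statements merged into one kernel-verified Lean document; each statement's English description precedes it below -/
import Mathlib

section
/- Let T be a closed linear relation with dom T ⊆ (mul T)^⊥. Then ζ belongs to the quasi-regular set of T if and only if ζ belongs to the quasi-regular set of the operator part T_s of T. -/
open scoped InnerProductSpace

/-- Let `T` be a closed linear relation with `dom T ⊆ (mul T)ᗮ`.
Then `ζ` is in the quasi-regular set of `T` if and only if `ζ` is in the
quasi-regular set of the operator part `T_s = T ∩ (H × (mul T)ᗮ)`. -/
theorem stmt_6 {H : Type*} [NormedAddCommGroup H] [InnerProductSpace ℂ H] [CompleteSpace H]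
    (T : Submodule ℂ (H × H)) (hT : IsClosed (T : Set (H × H)))
    (hdm : ∀ f : H, (∃ g : H, (f, g) ∈ T) → ∀ m : H, ((0 : H), m) ∈ T → ⟪m, f⟫_ℂ = 0)
    (ζ : ℂ) :
    (∃ C > (0 : ℝ), ∀ p ∈ (T : Set (H × H)), ‖p.1‖ ≤ C * ‖p.2 - ζ • p.1‖) ↔
      (∃ C > (0 : ℝ), ∀ p ∈ (T : Set (H × H)),
        (∀ m : H, ((0 : H), m) ∈ T → ⟪m, p.2⟫_ℂ = 0) →
          ‖p.1‖ ≤ C * ‖p.2 - ζ • p.1‖) := by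
  constructor
  · rintro ⟨C, hC, h⟩
    exact ⟨C, hC, fun p hp _ => h p hp⟩
  · rintro ⟨C, hC, h⟩
    -- the multivalued part
    set M : Submodule ℂ H := T.comap (LinearMap.inr ℂ H H) with hM
    have hMmem : ∀ m : H, m ∈ M ↔ ((0 : H), m) ∈ T := fun m => Iff.rfl
    have hMclosed : IsClosed (M : Set H) := by
      have : (M : Set H) = (fun m : H => ((0 : H), m)) ⁻¹' (T : Set (H × H)) := rfl
      rw [this]
      exact hT.preimage (continuous_const.prodMk continuous_id)
    haveI : CompleteSpace M := hMclosed.completeSpace_coe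
    refine ⟨C, hC, ?_⟩
    rintro ⟨f, g⟩ hp
    simp only at *
    set m : H := (M.orthogonalProjectionOnto g : H) with hm
    have hmM : m ∈ M := (M.orthogonalProjectionOnto g).2
    have haM : g - m ∈ Mᗮ := Submodule.sub_starProjection_mem_orthogonal (K := M) g
    have hfa : (f, g - m) ∈ T := by
      have := T.sub_mem hp ((hMmem m).1 hmM)
      simpa using this
    have key : ‖f‖ ≤ C * ‖(g - m) - ζ • f‖ := by
      refine h (f, g - m) hfa ?_
      intro m' hm'
      exact (Submodule.mem_orthogonal M (g - m)).1 haM m' ((hMmem m').2 hm')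
    have hf : f ∈ Mᗮ := by
      rw [Submodule.mem_orthogonal]
      intro u hu
      exact hdm f ⟨g, hp⟩ u ((hMmem u).1 hu)
    have ha2 : (g - m) - ζ • f ∈ Mᗮ := Mᗮ.sub_mem haM (Mᗮ.smul_mem ζ hf)
    have horth : ⟪(g - m) - ζ • f, m⟫_ℂ = 0 := by
      have := (Submodule.mem_orthogonal' M _).1 ha2 m hmM
      exact this
    have hnorm : ‖(g - m) - ζ • f‖ ≤ ‖g - ζ • f‖ := by
      have hsum : ((g - m) - ζ • f) + m = g - ζ • f := by abel
      have hsq := norm_add_sq_eq_norm_sq_add_norm_sq_of_inner_eq_zero _ m horth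
      rw [hsum] at hsq
      nlinarith [norm_nonneg ((g - m) - ζ • f), norm_nonneg m, norm_nonneg (g - ζ • f), sq_nonneg ‖m‖]
    calc ‖f‖ ≤ C * ‖(g - m) - ζ • f‖ := key
      _ ≤ C * ‖g - ζ • f‖ := by nlinarith
end

section
/- If L is a closed dissipative linear relation whose domain is the whole Hilbert space H, then L is (the graph of) a bounded maximal dissipative operator; in particular mul L = {0} and ran(L + iI) = H. -/
open scoped InnerProductSpace

/-- If `L` is a closed dissipative linear relation with
`dom L = H`, then `L` is (the graph of) a bounded maximal dissipative
operator: `L` is bounded, `mul L = {0}`, and `ran (L - ζI) = H` for every `ζ`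
in the open lower half-plane (in particular `ran (L + iI) = H`). -/
theorem stmt_8 {H : Type*} [NormedAddCommGroup H] [InnerProductSpace ℂ H] [CompleteSpace H]
    (L : Submodule ℂ (H × H)) (hclosed : IsClosed (L : Set (H × H)))
    (hdiss : ∀ p ∈ (L : Set (H × H)), 0 ≤ (⟪p.1, p.2⟫_ℂ).im)
    (hdom : ∀ f : H, ∃ g : H, (f, g) ∈ L) :
    (∃ C > (0 : ℝ), ∀ p ∈ (L : Set (H × H)), ‖p.2‖ ≤ C * ‖p.1‖) ∧
      {g : H | ((0 : H), g) ∈ L} = {0} ∧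
      (∀ ζ : ℂ, ζ.im < 0 → ∀ k : H, ∃ p ∈ (L : Set (H × H)), p.2 - ζ • p.1 = k) := by
  classical
  -- Step 1: multivalued part is trivial
  have hmul : ∀ g : H, ((0 : H), g) ∈ L → g = 0 := by
    intro g hg
    have key : ∀ f : H, ⟪f, g⟫_ℂ = 0 := by
      intro f
      obtain ⟨h, hfh⟩ := hdom f
      have hc : ∀ c : ℂ, 0 ≤ (⟪f, h⟫_ℂ + c * ⟪f, g⟫_ℂ).im := by
        intro c
        have hmem : ((f, h + c • g) : H × H) ∈ L := by
          have := L.add_mem hfh (L.smul_mem c hg)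
          simpa using this
        have := hdiss (f, h + c • g) hmem
        simpa [inner_add_right, inner_smul_right] using this
      by_contra hne
      set z := ⟪f, g⟫_ℂ with hz
      have hnsq : 0 < Complex.normSq z := by
        simpa [Complex.normSq_pos] using hne
      set t : ℝ := (((⟪f, h⟫_ℂ).im) + 1) / Complex.normSq z with ht
      have := hc (-(t : ℂ) * Complex.I * (starRingEnd ℂ) z)
      have him : ((-(t : ℂ) * Complex.I * (starRingEnd ℂ) z) * z).im
          = -(t * Complex.normSq z) := by
        have heq : (-(t : ℂ) * Complex.I * (starRingEnd ℂ) z) * z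
            = -(t : ℂ) * Complex.I * ((Complex.normSq z : ℂ)) := by
          rw [mul_assoc, mul_comm ((starRingEnd ℂ) z) z, Complex.mul_conj]
        rw [heq]
        simp
      rw [Complex.add_im, him] at this
      have ht' : t * Complex.normSq z = (⟪f, h⟫_ℂ).im + 1 := by
        rw [ht, div_mul_cancel₀ _ (ne_of_gt hnsq)]
      rw [ht'] at this
      linarith
    have := key g
    rw [inner_self_eq_zero] at this
    exact this
  -- Step 2: the operator
  choose T hT using hdom
  have huniq : ∀ f g : H, (f, g) ∈ L → g = T f := by
    intro f g hfg
    have : ((0 : H), g - T f) ∈ L := by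
      have := L.sub_mem hfg (hT f)
      simpa using this
    have := hmul _ this
    rwa [sub_eq_zero] at this
  have hadd : ∀ f f' : H, T (f + f') = T f + T f' := fun f f' =>
    (huniq _ _ (by simpa using L.add_mem (hT f) (hT f'))).symm
  have hsmul : ∀ (c : ℂ) (f : H), T (c • f) = c • T f := fun c f =>
    (huniq _ _ (by simpa using L.smul_mem c (hT f))).symm
  let Tl : H →ₗ[ℂ] H := ⟨⟨T, fun x y => hadd x y⟩, fun c x => hsmul c x⟩
  have hgraph : (Tl.graph : Set (H × H)) = (L : Set (H × H)) := by
    ext ⟨f, g⟩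
    simp only [SetLike.mem_coe, LinearMap.mem_graph_iff]
    constructor
    · intro hg
      have : g = T f := hg
      rw [this]; exact hT f
    · intro hg
      exact huniq f g hg
  have hcont : Continuous Tl :=
    Tl.continuous_of_isClosed_graph (by rw [hgraph]; exact hclosed)
  obtain ⟨C, hC0, hCb⟩ := SemilinearMapClass.bound_of_continuous Tl hcont
  refine ⟨⟨C, hC0, ?_⟩, ?_, ?_⟩
  · intro p hp
    have := huniq p.1 p.2 hp
    rw [this]
    exact hCb p.1
  · ext g
    simp only [Set.mem_setOf_eq, Set.mem_singleton_iff]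
    exact ⟨hmul g, fun h => by rw [h]; exact L.zero_mem⟩
  · intro ζ hζ k
    let Tc : H →L[ℂ] H := ⟨Tl, hcont⟩
    let S : H →L[ℂ] H := Tc - ζ • ContinuousLinearMap.id ℂ H
    have hS : ∀ f : H, S f = T f - ζ • f := fun f => rfl
    -- lower bound
    have hlow : ∀ f : H, (-ζ.im) * ‖f‖ ≤ ‖S f‖ := by
      intro f
      rcases eq_or_ne f 0 with rfl | hf0
      · simp
      have h1 : (-ζ.im) * (‖f‖ * ‖f‖) ≤ (⟪f, S f⟫_ℂ).im := by
        have : ⟪f, S f⟫_ℂ = ⟪f, T f⟫_ℂ - ζ * (‖f‖ : ℂ) ^ 2 := by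
          rw [hS, inner_sub_right, inner_smul_right, inner_self_eq_norm_sq_to_K]
          norm_cast
        rw [this]
        have hd : 0 ≤ (⟪f, T f⟫_ℂ).im := hdiss (f, T f) (hT f)
        have : (ζ * (‖f‖ : ℂ) ^ 2).im = ζ.im * ‖f‖ ^ 2 := by
          simp [Complex.mul_im, ← Complex.ofReal_pow]
        simp only [Complex.sub_im, this]
        nlinarith [sq_nonneg ‖f‖, sq_abs ‖f‖]
      have h2 : (⟪f, S f⟫_ℂ).im ≤ ‖f‖ * ‖S f‖ := by
        calc (⟪f, S f⟫_ℂ).im ≤ ‖⟪f, S f⟫_ℂ‖ := Complex.im_le_norm _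
          _ = ‖⟪f, S f⟫_ℂ‖ := rfl
          _ ≤ ‖f‖ * ‖S f‖ := norm_inner_le_norm _ _
      have hfpos : 0 < ‖f‖ := norm_pos_iff.mpr hf0
      have : (-ζ.im) * (‖f‖ * ‖f‖) ≤ ‖f‖ * ‖S f‖ := le_trans h1 h2
      nlinarith
    -- antilipschitz, closed range
    have hζpos : 0 < -ζ.im := by linarith
    have hanti : AntilipschitzWith ⟨(-ζ.im)⁻¹, by positivity⟩ S := by
      refine ContinuousLinearMap.antilipschitz_of_bound S ?_
      intro x
      show ‖x‖ ≤ (-ζ.im)⁻¹ * ‖S x‖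
      have h := mul_le_mul_of_nonneg_left (hlow x) (le_of_lt (by positivity : (0:ℝ) < (-ζ.im)⁻¹))
      calc ‖x‖ = (-ζ.im)⁻¹ * (-ζ.im * ‖x‖) := by
            rw [← mul_assoc, inv_mul_cancel₀ (ne_of_gt hζpos), one_mul]
        _ ≤ (-ζ.im)⁻¹ * ‖S x‖ := h
    have hcrange : IsClosed ((LinearMap.range (S : H →ₗ[ℂ] H) : Submodule ℂ H) : Set H) := by
      have := hanti.isClosed_range S.uniformContinuous
      simpa [Set.range, LinearMap.coe_range] using this
    haveI : CompleteSpace (LinearMap.range (S : H →ₗ[ℂ] H) : Submodule ℂ H) :=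
      hcrange.completeSpace_coe
    have hbot : (LinearMap.range (S : H →ₗ[ℂ] H))ᗮ = ⊥ := by
      rw [Submodule.eq_bot_iff]
      intro x hx
      have h0 : ⟪S x, x⟫_ℂ = 0 := by
        have := (Submodule.mem_orthogonal _ x).mp hx (S x) (LinearMap.mem_range_self _ x)
        exact this
      have hTk : ⟪T x, x⟫_ℂ = (starRingEnd ℂ) ζ * (‖x‖ : ℂ) ^ 2 := by
        have : ⟪S x, x⟫_ℂ = ⟪T x, x⟫_ℂ - (starRingEnd ℂ) ζ * (‖x‖ : ℂ) ^ 2 := by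
          rw [hS, inner_sub_left, inner_smul_left, inner_self_eq_norm_sq_to_K]
          norm_cast
        rw [this] at h0
        linear_combination h0
      have him : (⟪x, T x⟫_ℂ).im = ζ.im * ‖x‖ ^ 2 := by
        have hconj : ⟪x, T x⟫_ℂ = (starRingEnd ℂ) ⟪T x, x⟫_ℂ := by
          rw [← inner_conj_symm]
        rw [hconj, hTk]
        simp [Complex.mul_im, ← Complex.ofReal_pow]
      have hd : 0 ≤ (⟪x, T x⟫_ℂ).im := hdiss (x, T x) (hT x)
      rw [him] at hd
      have : ‖x‖ ^ 2 ≤ 0 := by nlinarith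
      have : ‖x‖ = 0 := by nlinarith [sq_nonneg ‖x‖, norm_nonneg x]
      exact norm_eq_zero.mp this
    have htop : LinearMap.range (S : H →ₗ[ℂ] H) = ⊤ := Submodule.orthogonal_eq_bot_iff.mp hbot
    have : ∃ f : H, S f = k := by
      have : k ∈ LinearMap.range (S : H →ₗ[ℂ] H) := htop ▸ Submodule.mem_top
      exact this
    obtain ⟨f, hf⟩ := this
    exact ⟨(f, T f), hT f, by rw [← hS]; exact hf⟩
end

section
/- If L is a maximal dissipative linear relation on a Hilbert space, then -L^{-1}, -L*, and -L^⊥ are maximal dissipative relations. -/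
open scoped InnerProductSpace

variable {H : Type*} [NormedAddCommGroup H] [InnerProductSpace ℂ H] [CompleteSpace H]

/-- A set `S ⊆ H × H` (a linear relation) is maximal dissipative: it is
closed, `Im ⟪f, g⟫ ≥ 0` on all of its elements, and `ran (S - ζI) = H` for
every `ζ` in the open lower half-plane. -/
def MaximalDissipative (S : Set (H × H)) : Prop :=
  IsClosed S ∧ (∀ p ∈ S, 0 ≤ (⟪p.1, p.2⟫_ℂ).im) ∧
    ∀ ζ : ℂ, ζ.im < 0 → ∀ k : H, ∃ p ∈ S, p.2 - ζ • p.1 = k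

/-- The adjoint relation `T* = {(h,k) : ⟪k,f⟫ = ⟪h,g⟫ for all (f,g) ∈ T}`. -/
def adjRel (T : Set (H × H)) : Set (H × H) :=
  {p | ∀ q ∈ T, ⟪p.2, q.1⟫_ℂ = ⟪p.1, q.2⟫_ℂ}

/-- The orthogonal complement of `T` in `H × H`, written out pointwise. -/
def relPerp (T : Set (H × H)) : Set (H × H) :=
  {p | ∀ q ∈ T, ⟪q.1, p.1⟫_ℂ + ⟪q.2, p.2⟫_ℂ = 0}

set_option linter.unusedSectionVars false

open Complex

lemma imageNegInv_eq (S : Set (H × H)) :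
    (fun p : H × H => (p.2, -p.1)) '' S = (fun q : H × H => (-q.2, q.1)) ⁻¹' S := by
  ext ⟨a, b⟩
  constructor
  · rintro ⟨⟨f, g⟩, hp, h⟩
    obtain ⟨rfl, rfl⟩ : g = a ∧ -f = b := by simpa [Prod.ext_iff] using h
    simpa using hp
  · intro h
    exact ⟨(-b, a), h, by simp⟩

lemma imageNeg2_eq (S : Set (H × H)) :
    (fun p : H × H => (p.1, -p.2)) '' S = (fun q : H × H => (q.1, -q.2)) ⁻¹' S := by
  ext ⟨a, b⟩
  constructor
  · rintro ⟨⟨f, g⟩, hp, h⟩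
    obtain ⟨rfl, rfl⟩ : f = a ∧ -g = b := by simpa [Prod.ext_iff] using h
    simpa using hp
  · intro h
    exact ⟨(a, -b), h, by simp⟩

lemma isClosed_adjRel (T : Set (H × H)) : IsClosed (adjRel T) := by
  have : adjRel T = ⋂ q ∈ T, {p : H × H | ⟪p.2, q.1⟫_ℂ = ⟪p.1, q.2⟫_ℂ} := by
    ext p; simp [adjRel]
  rw [this]
  exact isClosed_biInter fun q _ => isClosed_eq
    (Continuous.inner continuous_snd continuous_const)
    (Continuous.inner continuous_fst continuous_const)

/-- The adjoint relation of a submodule, as a submodule. -/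
def adjSub (L : Submodule ℂ (H × H)) : Submodule ℂ (H × H) where
  carrier := adjRel (L : Set (H × H))
  zero_mem' := by intro q _; simp
  add_mem' := by
    intro p r hp hr q hq
    simp only [Prod.fst_add, Prod.snd_add, inner_add_left]
    rw [hp q hq, hr q hq]
  smul_mem' := by
    intro c p hp q hq
    simp only [Prod.smul_fst, Prod.smul_snd, inner_smul_left]
    rw [hp q hq]

/-- Uniqueness of solutions of `g - ν f = w` for dissipative `L` and `ν` in the
lower half plane. -/
lemma diss_uniq (L : Submodule ℂ (H × H))
    (hd : ∀ p ∈ (L : Set (H × H)), 0 ≤ (⟪p.1, p.2⟫_ℂ).im) {ν : ℂ} (hν : ν.im < 0)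
    {p q : H × H} (hp : p ∈ L) (hq : q ∈ L)
    (h : p.2 - ν • p.1 = q.2 - ν • q.1) : p = q := by
  have hd' : p - q ∈ L := L.sub_mem hp hq
  have h2 : (p - q).2 = ν • (p - q).1 := by
    have h3 : p.2 - q.2 = ν • p.1 - ν • q.1 := sub_eq_sub_iff_sub_eq_sub.mp h
    simpa [Prod.sub_def, smul_sub] using h3
  have h0 : 0 ≤ (⟪(p - q).1, (p - q).2⟫_ℂ).im := hd _ hd'
  rw [h2, inner_smul_right, inner_self_eq_norm_sq_to_K] at h0
  have h4 : 0 ≤ ν.im * ‖(p - q).1‖ ^ 2 := by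
    simpa [← Complex.ofReal_pow, Complex.mul_im] using h0
  have h5 : ‖(p - q).1‖ = 0 := by
    by_contra hne
    have hpos : 0 < ‖(p - q).1‖ ^ 2 := by positivity
    nlinarith
  have h6 : (p - q).1 = 0 := norm_eq_zero.mp h5
  have h7 : p - q = 0 := by
    have h8 : (p - q).2 = 0 := by rw [h2, h6, smul_zero]
    exact Prod.ext_iff.mpr ⟨h6, by simpa using h8⟩
  exact sub_eq_zero.mp h7

lemma adj_diss (L : Submodule ℂ (H × H)) (hL : MaximalDissipative (L : Set (H × H)))
    {h k : H} (hhk : (h, k) ∈ adjRel (L : Set (H × H))) : (⟪h, k⟫_ℂ).im ≤ 0 := by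
  obtain ⟨r, hr, hre⟩ := hL.2.2 (-I) (by simp) (k - (-I) • h)
  set f := r.1 with hf
  set g := r.2 with hg
  set u := h - f with hu
  have hh : h = f + u := by rw [hu]; abel
  have hk : k = g + (-I) • u := by
    have h1 : k - (-I) • h = g - (-I) • f := hre.symm
    calc k = (k - (-I) • h) + (-I) • h := by abel
      _ = g - (-I) • f + (-I) • h := by rw [h1]
      _ = g + (-I) • u := by rw [hu, smul_sub]; abel
  have hadj : ⟪k, f⟫_ℂ = ⟪h, g⟫_ℂ := hhk r hr
  set a := ⟪f, g⟫_ℂ with ha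
  set b := ⟪f, u⟫_ℂ with hb
  have e1 : ⟪u, g⟫_ℂ = (starRingEnd ℂ) a + I * (starRingEnd ℂ) b - a := by
    rw [hk, hh] at hadj
    simp only [inner_add_left, inner_smul_left, inner_add_right] at hadj
    rw [← inner_conj_symm g f, ← inner_conj_symm u f] at hadj
    simp only [map_neg, Complex.conj_I] at hadj
    linear_combination -hadj
  have e2 : ⟪h, k⟫_ℂ = a + ⟪u, g⟫_ℂ + (-I) * b + (-I) * ⟪u, u⟫_ℂ := by
    rw [hh, hk]
    simp only [inner_add_left, inner_add_right, inner_smul_right]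
    ring
  have e3 : ⟪h, k⟫_ℂ = (starRingEnd ℂ) a - I * b + I * (starRingEnd ℂ) b
      - I * ⟪u, u⟫_ℂ := by
    rw [e2, e1]; ring
  have haim : 0 ≤ a.im := hL.2.1 r hr
  have hcim : (⟪u, u⟫_ℂ).im = 0 := by
    have := inner_self_im (𝕜 := ℂ) u
    simp only [RCLike.im_to_complex] at this
    exact this
  have hcre : 0 ≤ (⟪u, u⟫_ℂ).re := by
    have := norm_sq_eq_re_inner (𝕜 := ℂ) u
    simp only [RCLike.re_to_complex] at this
    nlinarith [sq_nonneg ‖u‖]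
  rw [e3]
  simp only [Complex.sub_im, Complex.add_im, Complex.mul_im, Complex.conj_re,
    Complex.conj_im, Complex.I_re, Complex.I_im, hcim]
  nlinarith

lemma adj_surj (L : Submodule ℂ (H × H)) (hL : MaximalDissipative (L : Set (H × H)))
    {μ : ℂ} (hμ : 0 < μ.im) (k₀ : H) :
    ∃ hh kk : H, (hh, kk) ∈ adjRel (L : Set (H × H)) ∧ kk - μ • hh = k₀ := by
  set ν := (starRingEnd ℂ) μ with hν
  have hνim : ν.im < 0 := by
    rw [hν]; simp only [Complex.conj_im]; linarith
  have hsur := hL.2.2 ν hνim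
  have hd := hL.2.1
  choose F hF1 hF2 using hsur
  have huniq : ∀ {p q : H × H}, p ∈ L → q ∈ L → p.2 - ν • p.1 = q.2 - ν • q.1 → p = q :=
    fun hp hq h => diss_uniq L hd hνim hp hq h
  have hFeq : ∀ p : H × H, p ∈ L → F (p.2 - ν • p.1) = p := fun p hp =>
    huniq (hF1 _) hp (by rw [hF2])
  have hFadd : ∀ w z, F (w + z) = F w + F z := by
    intro w z
    refine huniq (hF1 _) (L.add_mem (hF1 w) (hF1 z)) ?_
    have h1 : (F w + F z).2 - ν • (F w + F z).1 = w + z := by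
      have : (F w).2 + (F z).2 - ν • ((F w).1 + (F z).1)
          = ((F w).2 - ν • (F w).1) + ((F z).2 - ν • (F z).1) := by
        rw [smul_add]; abel
      rw [Prod.snd_add, Prod.fst_add, this, hF2, hF2]
    rw [hF2, h1]
  have hFsmul : ∀ (c : ℂ) w, F (c • w) = c • F w := by
    intro c w
    refine huniq (hF1 _) (L.smul_mem c (hF1 w)) ?_
    have h1 : (c • F w).2 - ν • (c • F w).1 = c • w := by
      rw [Prod.smul_snd, Prod.smul_fst, smul_comm ν c, ← smul_sub, hF2]
    rw [hF2, h1]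
  let B : H →ₗ[ℂ] H :=
    { toFun := fun w => (F w).1
      map_add' := fun w z => by show (F (w + z)).1 = (F w).1 + (F z).1; rw [hFadd]; rfl
      map_smul' := fun c w => by show (F (c • w)).1 = c • (F w).1; rw [hFsmul]; rfl }
  have hB2 : ∀ w, (F w).2 = w + ν • B w := by
    intro w
    have := hF2 w
    rw [sub_eq_iff_eq_add] at this
    rw [this]; rfl
  have hgraph : (B.graph : Set (H × H))
      = (fun q : H × H => (q.2, q.1 + ν • q.2)) ⁻¹' (L : Set (H × H)) := by
    ext ⟨w, x⟩
    simp only [Set.mem_preimage, SetLike.mem_coe, LinearMap.mem_graph_iff]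
    constructor
    · rintro rfl
      have h2 := hB2 w
      have h3 := hF1 w
      have h4 : F w = (B w, w + ν • B w) := by
        rw [← h2]; rfl
      rw [h4] at h3
      exact h3
    · intro hx
      have h5 := hFeq (x, w + ν • x) hx
      have h6 : (x, w + ν • x).2 - ν • (x, w + ν • x).1 = w := by
        simp only
        abel
      rw [h6] at h5
      show x = (F w).1
      rw [h5]
  have hBcont : Continuous B := by
    apply B.continuous_of_isClosed_graph
    rw [hgraph]
    apply IsClosed.preimage _ hL.1
    exact (continuous_snd.prodMk (continuous_fst.add (continuous_snd.const_smul ν)))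
  let Bc : H →L[ℂ] H := ⟨B, hBcont⟩
  let hh := ContinuousLinearMap.adjoint Bc k₀
  refine ⟨hh, k₀ + μ • hh, ?_, by rw [add_sub_cancel_right]⟩
  intro q hq
  set w := q.2 - ν • q.1 with hw
  have hq1 : q.1 = B w := by
    have := hFeq q hq
    rw [← hw] at this
    show q.1 = (F w).1
    rw [this]
  have hq2 : q.2 = w + ν • q.1 := by rw [hw]; abel
  show ⟪k₀ + μ • hh, q.1⟫_ℂ = ⟪hh, q.2⟫_ℂ
  rw [hq2, inner_add_left, inner_smul_left, inner_add_right, inner_smul_right]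
  have hadj : ⟪hh, w⟫_ℂ = ⟪k₀, Bc w⟫_ℂ := ContinuousLinearMap.adjoint_inner_left Bc w k₀
  have hBcw : (Bc w : H) = B w := rfl
  rw [hadj, hBcw, ← hq1, ← hν]

lemma maxdiss_negInv (L : Submodule ℂ (H × H)) (hL : MaximalDissipative (L : Set (H × H))) :
    MaximalDissipative ((fun p : H × H => (p.2, -p.1)) '' (L : Set (H × H))) := by
  refine ⟨?_, ?_, ?_⟩
  · rw [imageNegInv_eq]
    exact hL.1.preimage ((continuous_snd.neg).prodMk continuous_fst)
  · rintro p ⟨⟨f, g⟩, hq, rfl⟩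
    show 0 ≤ (⟪g, -f⟫_ℂ).im
    have h0 := hL.2.1 (f, g) hq
    rw [inner_neg_right, ← inner_conj_symm g f]
    simp only [Complex.neg_im, Complex.conj_im, neg_neg]
    exact h0
  · intro ζ hζ k
    have hζ0 : ζ ≠ 0 := fun h => by simp [h] at hζ
    have hns : 0 < Complex.normSq ζ := Complex.normSq_pos.mpr hζ0
    have hζ' : (-ζ⁻¹).im < 0 := by
      rw [Complex.neg_im, Complex.inv_im, neg_div, neg_neg]
      exact div_neg_of_neg_of_pos hζ hns
    obtain ⟨p, hp, hpe⟩ := hL.2.2 (-ζ⁻¹) hζ' (-(ζ⁻¹ • k))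
    refine ⟨(p.2, -p.1), ⟨p, hp, rfl⟩, ?_⟩
    show -p.1 - ζ • p.2 = k
    have h2 : (-ζ) • (p.2 - (-ζ⁻¹) • p.1) = (-ζ) • (-(ζ⁻¹ • k)) := by rw [hpe]
    rw [smul_sub, smul_smul, smul_neg, smul_smul] at h2
    have hc : (-ζ) * (-ζ⁻¹) = 1 := by field_simp
    have hc2 : (-ζ) * ζ⁻¹ = -1 := by field_simp
    simp only [hc, hc2, one_smul, neg_smul, neg_neg] at h2
    rw [← h2]; abel

lemma maxdiss_negAdj (L : Submodule ℂ (H × H)) (hL : MaximalDissipative (L : Set (H × H))) :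
    MaximalDissipative ((fun p : H × H => (p.1, -p.2)) '' adjRel (L : Set (H × H))) := by
  refine ⟨?_, ?_, ?_⟩
  · rw [imageNeg2_eq]
    exact (isClosed_adjRel _).preimage (continuous_fst.prodMk continuous_snd.neg)
  · rintro p ⟨⟨h, k⟩, hq, rfl⟩
    show 0 ≤ (⟪h, -k⟫_ℂ).im
    rw [inner_neg_right, Complex.neg_im]
    have := adj_diss L hL hq
    linarith
  · intro ζ hζ k₀
    have hμ : 0 < (-ζ).im := by rw [Complex.neg_im]; linarith
    obtain ⟨hh, kk, hmem, he⟩ := adj_surj L hL hμ (-k₀)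
    refine ⟨(hh, -kk), ⟨(hh, kk), hmem, rfl⟩, ?_⟩
    show -kk - ζ • hh = k₀
    have h2 : kk + ζ • hh = -k₀ := by rw [← he, neg_smul, sub_neg_eq_add]
    rw [← neg_neg k₀, ← h2]; abel

/-- the map `(f,g) ↦ (f,-g)` as a linear map. -/
def negSnd : (H × H) →ₗ[ℂ] (H × H) :=
  LinearMap.prod (LinearMap.fst ℂ H H) (-(LinearMap.snd ℂ H H))

lemma negSnd_apply (p : H × H) : negSnd p = (p.1, -p.2) := rfl

lemma relPerp_image_eq (L : Submodule ℂ (H × H)) :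
    (fun p : H × H => (p.1, -p.2)) '' relPerp (L : Set (H × H))
      = (fun p : H × H => (p.2, -p.1)) ''
        ((fun p : H × H => (p.1, -p.2)) '' adjRel (L : Set (H × H))) := by
  rw [imageNeg2_eq, imageNegInv_eq, imageNeg2_eq]
  ext ⟨a, b⟩
  simp only [Set.mem_preimage, adjRel, relPerp, Set.mem_setOf_eq]
  constructor <;> intro hcond q hq <;> have h1 := hcond q hq
  · show ⟪-a, q.1⟫_ℂ = ⟪-b, q.2⟫_ℂ
    rw [inner_neg_right] at h1
    have h2 : ⟪q.1, a⟫_ℂ = ⟪q.2, b⟫_ℂ := by linear_combination h1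
    rw [inner_neg_left, inner_neg_left, ← inner_conj_symm a q.1, ← inner_conj_symm b q.2, h2]
  · show ⟪q.1, a⟫_ℂ + ⟪q.2, -b⟫_ℂ = 0
    rw [inner_neg_left, inner_neg_left, ← inner_conj_symm a q.1, ← inner_conj_symm b q.2] at h1
    have h4 : ⟪q.1, a⟫_ℂ = ⟪q.2, b⟫_ℂ := by
      have h5 := congrArg (starRingEnd ℂ) h1
      simpa using h5
    rw [inner_neg_right, h4]
    ring


/-- If `L` is a maximal dissipative linear relation, then
`-L⁻¹`, `-L*` and `-L^⊥` are maximal dissipative relations. -/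
theorem stmt_10 (L : Submodule ℂ (H × H)) (hL : MaximalDissipative (L : Set (H × H))) :
    MaximalDissipative ((fun p : H × H => (p.2, -p.1)) '' (L : Set (H × H))) ∧
    MaximalDissipative ((fun p : H × H => (p.1, -p.2)) '' adjRel (L : Set (H × H))) ∧
    MaximalDissipative ((fun p : H × H => (p.1, -p.2)) '' relPerp (L : Set (H × H))) := by
  refine ⟨maxdiss_negInv L hL, maxdiss_negAdj L hL, ?_⟩
  rw [relPerp_image_eq L]
  set M : Submodule ℂ (H × H) := (adjSub L).map negSnd with hM
  have hMcoe : (M : Set (H × H)) = (fun p : H × H => (p.1, -p.2)) '' adjRel (L : Set (H × H)) := by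
    rw [hM, Submodule.map_coe]
    rfl
  have hMmax : MaximalDissipative (M : Set (H × H)) := by
    rw [hMcoe]; exact maxdiss_negAdj L hL
  have := maxdiss_negInv M hMmax
  rwa [hMcoe] at this
end

section
/- If A and V are maximal dissipative linear relations on a Hilbert space H and dom V = H (so V is a bounded everywhere-defined operator), then the sum relation L = A + V = {(f, g+h) : (f,g) ∈ A, (f,h) ∈ V} is a maximal dissipative relation. -/
open scoped InnerProductSpace NNReal

set_option linter.unusedSectionVars false

variable {H : Type*} [NormedAddCommGroup H] [InnerProductSpace ℂ H] [CompleteSpace H]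

lemma diss_est (ζ : ℂ) (hζ : ζ.im < 0) (f g : H) (hd : 0 ≤ (⟪f, g⟫_ℂ).im) :
    (-ζ.im) * ‖f‖ ≤ ‖g - ζ • f‖ := by
  have h1 : (⟪f, g - ζ • f⟫_ℂ).im = (⟪f, g⟫_ℂ).im - ζ.im * ‖f‖ ^ 2 := by
    rw [inner_sub_right, inner_smul_right, inner_self_eq_norm_sq_to_K]
    simp [Complex.sub_im, Complex.mul_im, ← Complex.ofReal_pow]
  have h2 : (-ζ.im) * ‖f‖ ^ 2 ≤ |(⟪f, g - ζ • f⟫_ℂ).im| := by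
    rw [h1]
    rw [abs_of_nonneg (by nlinarith [sq_nonneg ‖f‖])]
    nlinarith [sq_nonneg ‖f‖]
  have h3 : |(⟪f, g - ζ • f⟫_ℂ).im| ≤ ‖⟪f, g - ζ • f⟫_ℂ‖ := Complex.abs_im_le_norm _
  have h4 : ‖⟪f, g - ζ • f⟫_ℂ‖ ≤ ‖f‖ * ‖g - ζ • f‖ := norm_inner_le_norm f _
  rcases eq_or_lt_of_le (norm_nonneg f) with h | h
  · simp [← h]
  · have := h2.trans (h3.trans h4)
    nlinarith

lemma perturb (L : Submodule ℂ (H × H)) (W U : H →L[ℂ] H) (ζ : ℂ) (hζ : ζ.im < 0)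
    (hd : ∀ p ∈ L, 0 ≤ (⟪p.1, p.2 + W p.1⟫_ℂ).im)
    (hs : ∀ k : H, ∃ p ∈ (L : Set (H × H)), p.2 + W p.1 - ζ • p.1 = k)
    (hU : ‖U‖ < -ζ.im) :
    ∀ k : H, ∃ p ∈ (L : Set (H × H)), p.2 + W p.1 + U p.1 - ζ • p.1 = k := by
  intro k
  choose p hpL hpk using hs
  have hres : ∀ k₁ k₂ : H, (-ζ.im) * ‖(p k₁).1 - (p k₂).1‖ ≤ ‖k₁ - k₂‖ := by
    intro k₁ k₂
    have hmem : p k₁ - p k₂ ∈ L := L.sub_mem (hpL k₁) (hpL k₂)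
    have hd' := hd _ hmem
    have est := diss_est ζ hζ ((p k₁ - p k₂).1)
      ((p k₁ - p k₂).2 + W ((p k₁ - p k₂).1)) hd'
    have heq : (p k₁ - p k₂).2 + W ((p k₁ - p k₂).1) - ζ • (p k₁ - p k₂).1 = k₁ - k₂ := by
      have e1 := hpk k₁
      have e2 := hpk k₂
      set a := p k₁ with ha
      set b := p k₂ with hb
      simp only [Prod.fst_sub, Prod.snd_sub, map_sub, smul_sub]
      rw [← e1, ← e2]
      abel
    rw [heq] at est
    exact est
  set c : ℝ≥0 := ⟨‖U‖ / (-ζ.im), div_nonneg (norm_nonneg _) (by linarith)⟩ with hc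
  have hcarith : (c : ℝ) = ‖U‖ / (-ζ.im) := rfl
  set Φ : H → H := fun f => (p (k - U f)).1 with hΦ
  have hlip : LipschitzWith c Φ := by
    apply LipschitzWith.of_dist_le_mul
    intro f₁ f₂
    rw [dist_eq_norm, dist_eq_norm, hcarith]
    have h1 := hres (k - U f₁) (k - U f₂)
    have h2 : ‖(k - U f₁) - (k - U f₂)‖ = ‖U (f₂ - f₁)‖ := by
      rw [map_sub]; congr 1; abel
    have h3 : ‖U (f₂ - f₁)‖ ≤ ‖U‖ * ‖f₁ - f₂‖ := by
      rw [show f₂ - f₁ = -(f₁ - f₂) by abel, map_neg, norm_neg]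
      exact U.le_opNorm _
    rw [div_mul_eq_mul_div, le_div_iff₀ (by linarith)]
    calc ‖Φ f₁ - Φ f₂‖ * -ζ.im = (-ζ.im) * ‖(p (k - U f₁)).1 - (p (k - U f₂)).1‖ := by
          rw [mul_comm]
      _ ≤ ‖(k - U f₁) - (k - U f₂)‖ := h1
      _ = ‖U (f₂ - f₁)‖ := h2
      _ ≤ ‖U‖ * ‖f₁ - f₂‖ := h3
  have hcontr : ContractingWith c Φ := by
    constructor
    · rw [← NNReal.coe_lt_coe]
      simpa [hcarith, div_lt_one (show (0:ℝ) < -ζ.im by linarith)] using hU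
    · exact hlip
  haveI : Nonempty H := ⟨0⟩
  set f := ContractingWith.fixedPoint Φ hcontr with hf
  have hfix : Φ f = f := hcontr.fixedPoint_isFixedPt
  refine ⟨p (k - U f), hpL _, ?_⟩
  have h1 : (p (k - U f)).1 = f := hfix
  have h2 := hpk (k - U f)
  rw [h1] at h2 ⊢
  rw [show (p (k - U f)).2 + W f + U f - ζ • f
      = ((p (k - U f)).2 + W f - ζ • f) + U f by abel, h2]
  abel

/-- If `A` and `V` are maximal dissipative linear relations and
`dom V = H`, then the sum relation `L = A + V = {(f, g + h) : (f,g) ∈ A,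
(f,h) ∈ V}` is maximal dissipative. -/
theorem stmt_11 (A V : Submodule ℂ (H × H))
    (hA : MaximalDissipative (A : Set (H × H)))
    (hV : MaximalDissipative (V : Set (H × H)))
    (hdomV : ∀ f : H, ∃ h : H, (f, h) ∈ V) :
    MaximalDissipative
      {p : H × H | ∃ g h : H, (p.1, g) ∈ A ∧ (p.1, h) ∈ V ∧ p.2 = g + h} := by
  choose w hw using hdomV
  -- the multivalued part of V is trivial
  have hmul : ∀ k : H, (k, (0:H)) + (0, k) ∈ V → True := fun _ _ => trivial
  have htriv : ∀ k : H, ((0:H), k) ∈ V → k = 0 := by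
    intro k hk
    by_contra hk0
    have hknorm : (0:ℝ) < ‖k‖ ^ 2 := pow_pos (norm_pos_iff.mpr hk0) 2
    set M : ℝ := (⟪k, w k⟫_ℂ).im with hM
    set s : ℝ := (M + 1) / ‖k‖ ^ 2 with hs
    have hmem : (k, w k + (-(s:ℂ) * Complex.I) • k) ∈ V := by
      have h1 : ((-(s:ℂ) * Complex.I) • ((0:H), k) : H × H)
          = ((0:H), (-(s:ℂ) * Complex.I) • k) := by simp
      have h2 := V.add_mem (hw k) (h1 ▸ V.smul_mem (-(s:ℂ) * Complex.I) hk)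
      simpa using h2
    have hd := hV.2.1 _ hmem
    simp only at hd
    rw [inner_add_right, inner_smul_right, inner_self_eq_norm_sq_to_K] at hd
    have hd2 : 0 ≤ M - s * ‖k‖ ^ 2 := by
      simpa [Complex.add_im, Complex.mul_im, ← Complex.ofReal_pow] using hd
    have : s * ‖k‖ ^ 2 = M + 1 := div_mul_cancel₀ _ (ne_of_gt hknorm)
    linarith
  -- V is single-valued
  have hsingle : ∀ f h : H, (f, h) ∈ V → h = w f := by
    intro f h hf
    have : ((0:H), h - w f) ∈ V := by
      have := V.sub_mem hf (hw f)
      simpa using this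
    have := htriv _ this
    rwa [sub_eq_zero] at this
  -- build the continuous linear operator
  set vlin : H →ₗ[ℂ] H :=
    { toFun := w
      map_add' := by
        intro a b
        exact (hsingle (a + b) (w a + w b) (by simpa using V.add_mem (hw a) (hw b))).symm
      map_smul' := by
        intro c a
        exact (hsingle (c • a) (c • w a) (by simpa using V.smul_mem c (hw a))).symm }
    with hvlin
  have hgraph : (vlin.graph : Set (H × H)) = (V : Set (H × H)) := by
    ext q
    simp only [SetLike.mem_coe, LinearMap.mem_graph_iff]
    constructor
    · intro hq
      have : q = (q.1, w q.1) := by rw [Prod.ext_iff]; exact ⟨rfl, hq⟩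
      rw [this]; exact hw q.1
    · intro hq
      exact hsingle q.1 q.2 hq
  set v : H →L[ℂ] H := ContinuousLinearMap.ofIsClosedGraph (g := vlin)
    (by rw [hgraph]; exact hV.1) with hv
  have hvw : ∀ f : H, v f = w f := fun f => rfl
  have hvmem : ∀ f : H, (f, v f) ∈ V := by intro f; rw [hvw]; exact hw f
  have hvdiss : ∀ f : H, 0 ≤ (⟪f, v f⟫_ℂ).im := fun f => hV.2.1 (f, v f) (hvmem f)
  -- characterize L
  have hLs : {p : H × H | ∃ g h : H, (p.1, g) ∈ A ∧ (p.1, h) ∈ V ∧ p.2 = g + h}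
      = (fun q : H × H => (q.1, q.2 - v q.1)) ⁻¹' (A : Set (H × H)) := by
    ext ⟨f, x⟩
    simp only [Set.mem_setOf_eq, Set.mem_preimage, SetLike.mem_coe]
    constructor
    · rintro ⟨g, h, hg, hh, hx⟩
      have : h = v f := by rw [hvw]; exact hsingle f h hh
      rw [hx, this, add_sub_cancel_right]
      exact hg
    · intro hmem
      exact ⟨x - v f, v f, hmem, hvmem f, by abel⟩
  refine ⟨?_, ?_, ?_⟩
  · rw [hLs]
    exact hA.1.preimage (continuous_fst.prodMk (continuous_snd.sub
      (v.continuous.comp continuous_fst)))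
  · rintro p ⟨g, h, hg, hh, hp⟩
    rw [hp, inner_add_right, Complex.add_im]
    have := hA.2.1 _ hg
    have := hV.2.1 _ hh
    simp only at *
    positivity
  · intro ζ hζ k
    -- induction on j : coefficient j/n
    obtain ⟨n, hn⟩ := exists_nat_gt (‖v‖ / (-ζ.im))
    have hζ' : (0:ℝ) < -ζ.im := by linarith
    have hn0 : 0 < n := by
      rcases Nat.eq_zero_or_pos n with h | h
      · exfalso; rw [h] at hn; have : 0 ≤ ‖v‖ / (-ζ.im) := by positivity
        simp at hn; linarith
      · exact h
    have hnR : (0:ℝ) < (n:ℝ) := by exact_mod_cast hn0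
    have key : ∀ j : ℕ, j ≤ n → ∀ k' : H, ∃ p ∈ (A : Set (H × H)),
        p.2 + (((j:ℂ)/(n:ℂ)) • v) p.1 - ζ • p.1 = k' := by
      intro j
      induction j with
      | zero =>
        intro _ k'
        obtain ⟨p, hp, hpk⟩ := hA.2.2 ζ hζ k'
        exact ⟨p, hp, by simpa using hpk⟩
      | succ j ih =>
        intro hj k'
        have hWd : ∀ p ∈ A, 0 ≤ (⟪p.1, p.2 + (((j:ℂ)/(n:ℂ)) • v) p.1⟫_ℂ).im := by
          intro p hp
          rw [ContinuousLinearMap.smul_apply, inner_add_right, inner_smul_right]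
          have h1 := hA.2.1 _ hp
          have h2 := hvdiss p.1
          have hcre : (((j:ℂ)/(n:ℂ)) * ⟪p.1, v p.1⟫_ℂ).im
              = ((j:ℝ)/(n:ℝ)) * (⟪p.1, v p.1⟫_ℂ).im := by
            have : ((j:ℂ)/(n:ℂ)) = (((j:ℝ)/(n:ℝ) : ℝ) : ℂ) := by push_cast; ring
            rw [this, Complex.im_ofReal_mul]
          rw [Complex.add_im, hcre]
          have : 0 ≤ ((j:ℝ)/(n:ℝ)) * (⟪p.1, v p.1⟫_ℂ).im := by positivity
          linarith
        have hU : ‖((1:ℂ)/(n:ℂ)) • v‖ < -ζ.im := by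
          rw [norm_smul]
          have : ‖(1:ℂ)/(n:ℂ)‖ = 1 / (n:ℝ) := by
            simp [norm_div]
          rw [this, div_mul_eq_mul_div, one_mul, div_lt_iff₀ hnR]
          calc ‖v‖ < (n:ℝ) * (-ζ.im) := by
                rw [div_lt_iff₀ hζ'] at hn; linarith [hn]
            _ = -ζ.im * (n:ℝ) := by ring
        have hstep := perturb A (((j:ℂ)/(n:ℂ)) • v) (((1:ℂ)/(n:ℂ)) • v) ζ hζ hWd
          (ih (by omega)) hU k'
        obtain ⟨p, hp, hpk⟩ := hstep
        refine ⟨p, hp, ?_⟩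
        rw [← hpk]
        simp only [ContinuousLinearMap.smul_apply]
        have hsplit : ((((j+1:ℕ)):ℂ)/(n:ℂ)) • (v p.1)
            = ((j:ℂ)/(n:ℂ)) • v p.1 + ((1:ℂ)/(n:ℂ)) • v p.1 := by
          rw [← add_smul]
          congr 1
          push_cast
          ring
        rw [hsplit]
        abel
    obtain ⟨p, hp, hpk⟩ := key n le_rfl k
    have hone : ((n:ℂ)/(n:ℂ)) = 1 := by
      rw [div_self]; exact_mod_cast hn0.ne'
    rw [hone] at hpk
    simp only [one_smul, ContinuousLinearMap.one_def] at hpk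
    refine ⟨(p.1, p.2 + v p.1), ⟨p.2, v p.1, hp, hvmem p.1, rfl⟩, ?_⟩
    simpa using hpk
end

section
/- Let T and S be linear relations with S strongly T-bounded, i.e., dom T ⊆ dom S and there exists c < 1 such that ‖g‖ ≤ c(‖f‖ + ‖h‖) for all (f,h) ∈ T and (f,g) ∈ S. Then T is closed if and only if T + S is closed. -/
open scoped InnerProductSpace

open Filter Topology

private lemma cauchy_aux {H : Type*} [NormedAddCommGroup H]
    {a b d : ℕ → H} {K L : ℝ}
    (hcb : CauchySeq b) (hcd : CauchySeq d)
    (hab : ∀ n m, ‖a n - a m‖ ≤ K * ‖b n - b m‖ + L * ‖d n - d m‖) :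
    CauchySeq a := by
  rw [Metric.cauchySeq_iff] at hcb hcd ⊢
  intro ε hε
  have hK1 : (0:ℝ) < |K| + 1 := by positivity
  have hL1 : (0:ℝ) < |L| + 1 := by positivity
  obtain ⟨N1, hN1⟩ := hcb (ε / (3 * (|K| + 1))) (by positivity)
  obtain ⟨N2, hN2⟩ := hcd (ε / (3 * (|L| + 1))) (by positivity)
  refine ⟨max N1 N2, fun n hn m hm => ?_⟩
  have h1 := hN1 n (le_trans (le_max_left _ _) hn) m (le_trans (le_max_left _ _) hm)
  have h2 := hN2 n (le_trans (le_max_right _ _) hn) m (le_trans (le_max_right _ _) hm)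
  rw [dist_eq_norm] at h1 h2 ⊢
  have h3 := hab n m
  have hKb : K * ‖b n - b m‖ ≤ (|K| + 1) * ‖b n - b m‖ := by
    nlinarith [le_abs_self K, norm_nonneg (b n - b m)]
  have hLd : L * ‖d n - d m‖ ≤ (|L| + 1) * ‖d n - d m‖ := by
    nlinarith [le_abs_self L, norm_nonneg (d n - d m)]
  have e1 : (|K| + 1) * ‖b n - b m‖ < (|K| + 1) * (ε / (3 * (|K| + 1))) :=
    mul_lt_mul_of_pos_left h1 hK1
  have e2 : (|L| + 1) * ‖d n - d m‖ < (|L| + 1) * (ε / (3 * (|L| + 1))) :=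
    mul_lt_mul_of_pos_left h2 hL1
  have e1' : (|K| + 1) * (ε / (3 * (|K| + 1))) = ε / 3 := by field_simp
  have e2' : (|L| + 1) * (ε / (3 * (|L| + 1))) = ε / 3 := by field_simp
  linarith

/-- Let `S` be strongly `T`-bounded: `dom T ⊆ dom S` and there
is `0 ≤ c < 1` with `‖g‖ ≤ c (‖f‖ + ‖h‖)` for all `(f,h) ∈ T`, `(f,g) ∈ S`.
Then `T` is closed if and only if `T + S` is closed. -/
theorem stmt_12 {H : Type*} [NormedAddCommGroup H] [InnerProductSpace ℂ H] [CompleteSpace H]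
    (T S : Submodule ℂ (H × H))
    (hdom : ∀ f : H, (∃ h : H, (f, h) ∈ T) → ∃ g : H, (f, g) ∈ S)
    (hbd : ∃ c : ℝ, 0 ≤ c ∧ c < 1 ∧ ∀ f h g : H,
      (f, h) ∈ T → (f, g) ∈ S → ‖g‖ ≤ c * (‖f‖ + ‖h‖)) :
    IsClosed (T : Set (H × H)) ↔
      IsClosed {p : H × H | ∃ h g : H, (p.1, h) ∈ T ∧ (p.1, g) ∈ S ∧ p.2 = h + g} := by
  obtain ⟨c, hc0, hc1, hb⟩ := hbd
  have h1c : (0:ℝ) < 1 - c := by linarith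
  -- key difference estimate
  have key : ∀ f1 h1 g1 f2 h2 g2 : H, (f1, h1) ∈ T → (f1, g1) ∈ S →
      (f2, h2) ∈ T → (f2, g2) ∈ S →
      ‖g1 - g2‖ ≤ c * (‖f1 - f2‖ + ‖h1 - h2‖) := by
    intro f1 h1 g1 f2 h2 g2 hT1 hS1 hT2 hS2
    have hT : ((f1 - f2, h1 - h2) : H × H) ∈ T := by
      have := T.sub_mem hT1 hT2
      rwa [Prod.mk_sub_mk] at this
    have hS : ((f1 - f2, g1 - g2) : H × H) ∈ S := by
      have := S.sub_mem hS1 hS2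
      rwa [Prod.mk_sub_mk] at this
    exact hb _ _ _ hT hS
  constructor
  · -- T closed ⇒ T + S closed
    intro hT
    apply IsSeqClosed.isClosed
    intro u p hu hup
    choose h g hTm hSm hk using hu
    have hfc : Filter.Tendsto (fun n => (u n).1) atTop (𝓝 p.1) :=
      (continuous_fst.tendsto p).comp hup
    have hkc : Filter.Tendsto (fun n => (u n).2) atTop (𝓝 p.2) :=
      (continuous_snd.tendsto p).comp hup
    -- h is Cauchy
    have hch : CauchySeq h := by
      apply cauchy_aux (K := c / (1 - c)) (L := 1 / (1 - c))
        hfc.cauchySeq hkc.cauchySeq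
      intro n m
      have e1 := key _ _ _ _ _ _ (hTm n) (hSm n) (hTm m) (hSm m)
      have e2 : ‖h n - h m‖ ≤ ‖(u n).2 - (u m).2‖ + ‖g n - g m‖ := by
        have : h n - h m = ((u n).2 - (u m).2) - (g n - g m) := by
          rw [hk n, hk m]; abel
        rw [this]
        exact norm_sub_le _ _
      rw [div_mul_eq_mul_div, div_mul_eq_mul_div, ← add_div, le_div_iff₀ h1c]
      nlinarith [norm_nonneg ((u n).1 - (u m).1), norm_nonneg (h n - h m)]
    obtain ⟨hinf, hhinf⟩ := cauchySeq_tendsto_of_complete hch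
    -- limit pair is in T
    have hTlim : (p.1, hinf) ∈ T := by
      have : Filter.Tendsto (fun n => (((u n).1, h n) : H × H)) atTop (𝓝 (p.1, hinf)) :=
        hfc.prodMk_nhds hhinf
      exact hT.isSeqClosed (fun n => hTm n) this
    -- get the S element for p.1
    obtain ⟨g', hg'⟩ := hdom p.1 ⟨hinf, hTlim⟩
    -- g n → g'
    have hgc : Filter.Tendsto g atTop (𝓝 g') := by
      rw [tendsto_iff_norm_sub_tendsto_zero]
      apply squeeze_zero (fun n => norm_nonneg _)
        (g := fun n => c * (‖(u n).1 - p.1‖ + ‖h n - hinf‖))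
      · intro n
        exact key _ _ _ _ _ _ (hTm n) (hSm n) hTlim hg'
      · have hf0 : Filter.Tendsto (fun n => ‖(u n).1 - p.1‖) atTop (𝓝 0) :=
          tendsto_iff_norm_sub_tendsto_zero.mp hfc
        have hh0 : Filter.Tendsto (fun n => ‖h n - hinf‖) atTop (𝓝 0) :=
          tendsto_iff_norm_sub_tendsto_zero.mp hhinf
        have := (hf0.add hh0).const_mul c
        simpa using this
    -- p.2 = hinf + g'
    have hsum : Filter.Tendsto (fun n => h n + g n) atTop (𝓝 (hinf + g')) := hhinf.add hgc
    have hsum' : Filter.Tendsto (fun n => h n + g n) atTop (𝓝 p.2) := by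
      have : (fun n => h n + g n) = fun n => (u n).2 := by
        funext n; rw [← hk n]
      rw [this]; exact hkc
    have : p.2 = hinf + g' := tendsto_nhds_unique hsum' hsum
    exact ⟨hinf, g', hTlim, hg', this⟩
  · -- T + S closed ⇒ T closed
    intro hTS
    apply IsSeqClosed.isClosed
    intro u p hu hup
    have hfc : Filter.Tendsto (fun n => (u n).1) atTop (𝓝 p.1) :=
      (continuous_fst.tendsto p).comp hup
    have hhc : Filter.Tendsto (fun n => (u n).2) atTop (𝓝 p.2) :=
      (continuous_snd.tendsto p).comp hup
    have humem : ∀ n, ((u n).1, (u n).2) ∈ T := fun n => hu n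
    choose g hSm using fun n => hdom (u n).1 ⟨(u n).2, humem n⟩
    -- g is Cauchy
    have hcg : CauchySeq g := by
      apply cauchy_aux (K := c) (L := c) hfc.cauchySeq hhc.cauchySeq
      intro n m
      have := key _ _ _ _ _ _ (humem n) (hSm n) (humem m) (hSm m)
      linarith [mul_nonneg hc0 (norm_nonneg ((u n).1 - (u m).1)),
        mul_nonneg hc0 (norm_nonneg ((u n).2 - (u m).2)),
        mul_le_mul_of_nonneg_left (le_refl ‖(u n).1 - (u m).1‖) hc0]
    obtain ⟨ginf, hginf⟩ := cauchySeq_tendsto_of_complete hcg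
    -- (u n).1, (u n).2 + g n ∈ T+S set, converging to (p.1, p.2 + ginf)
    have hmem : ∀ n, (((u n).1, (u n).2 + g n) : H × H) ∈
        {p : H × H | ∃ h g : H, (p.1, h) ∈ T ∧ (p.1, g) ∈ S ∧ p.2 = h + g} :=
      fun n => ⟨(u n).2, g n, humem n, hSm n, rfl⟩
    have hconv : Filter.Tendsto (fun n => (((u n).1, (u n).2 + g n) : H × H)) atTop
        (𝓝 (p.1, p.2 + ginf)) := hfc.prodMk_nhds (hhc.add hginf)
    obtain ⟨h', g', hT', hS', heq⟩ := hTS.isSeqClosed hmem hconv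
    -- show h' = p.2
    have hgn : Filter.Tendsto (fun n => ‖g n - g'‖) atTop (𝓝 ‖ginf - g'‖) :=
      ((continuous_norm.tendsto _).comp (hginf.sub_const g'))
    have hbound : Filter.Tendsto (fun n => c * (‖(u n).1 - p.1‖ + ‖(u n).2 - h'‖)) atTop
        (𝓝 (c * (0 + ‖p.2 - h'‖))) := by
      have hf0 : Filter.Tendsto (fun n => ‖(u n).1 - p.1‖) atTop (𝓝 0) :=
        tendsto_iff_norm_sub_tendsto_zero.mp hfc
      have hh0 : Filter.Tendsto (fun n => ‖(u n).2 - h'‖) atTop (𝓝 ‖p.2 - h'‖) :=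
        ((continuous_norm.tendsto _).comp (hhc.sub_const h'))
      exact (hf0.add hh0).const_mul c
    have hle : ‖ginf - g'‖ ≤ c * (0 + ‖p.2 - h'‖) := by
      apply le_of_tendsto_of_tendsto' hgn hbound
      intro n
      exact key _ _ _ _ _ _ (humem n) (hSm n) hT' hS'
    have heq2 : ginf - g' = h' - p.2 := by
      rw [sub_eq_sub_iff_add_eq_add, add_comm ginf p.2]
      exact heq
    have : ‖h' - p.2‖ ≤ c * ‖p.2 - h'‖ := by
      rw [← heq2]; simpa using hle
    rw [norm_sub_rev p.2 h'] at this
    have hz : ‖h' - p.2‖ = 0 := by nlinarith [norm_nonneg (h' - p.2)]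
    have : h' = p.2 := by
      rwa [norm_eq_zero, sub_eq_zero] at hz
    have : ((p.1, p.2) : H × H) ∈ T := this ▸ hT'
    exact this
end

section
/- If L is a maximal dissipative linear relation, then closure(dom L) = (mul L)^⊥; more generally for any closed dissipative relation L, dom L ⊆ (mul L)^⊥. -/
open scoped InnerProductSpace

/-- For a closed dissipative linear relation `L`,
`dom L ⊆ (mul L)ᗮ`; and if moreover `L` is maximal dissipative
(`ran (L - ζI) = H` for all `ζ` in the open lower half-plane), then
`closure (dom L) = (mul L)ᗮ`. -/
theorem stmt_14 {H : Type*} [NormedAddCommGroup H] [InnerProductSpace ℂ H] [CompleteSpace H]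
    (L : Submodule ℂ (H × H)) (hclosed : IsClosed (L : Set (H × H)))
    (hdiss : ∀ p ∈ (L : Set (H × H)), 0 ≤ (⟪p.1, p.2⟫_ℂ).im) :
    {f : H | ∃ g : H, (f, g) ∈ L} ⊆ {x : H | ∀ m : H, ((0 : H), m) ∈ L → ⟪m, x⟫_ℂ = 0} ∧
      ((∀ ζ : ℂ, ζ.im < 0 → ∀ k : H, ∃ p ∈ (L : Set (H × H)), p.2 - ζ • p.1 = k) →
        closure {f : H | ∃ g : H, (f, g) ∈ L} =
          {x : H | ∀ m : H, ((0 : H), m) ∈ L → ⟪m, x⟫_ℂ = 0}) := by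
  classical
  -- Part 1 key lemma
  have key : ∀ f g : H, (f, g) ∈ L → ∀ m : H, ((0:H), m) ∈ L → ⟪m, f⟫_ℂ = 0 := by
    intro f g hfg m hm
    have hc : ⟪f, m⟫_ℂ = 0 := by
      by_contra hc
      set a : ℝ := (⟪f, g⟫_ℂ).im with ha
      set t : ℂ := (-((a:ℂ)+1) * Complex.I) / ⟪f, m⟫_ℂ with ht
      have hmem : (f, g + t • m) ∈ L := by
        have h1 := L.add_mem hfg (L.smul_mem t hm)
        simpa using h1
      have h0 := hdiss _ hmem
      simp only at h0
      rw [inner_add_right, inner_smul_right] at h0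
      have htc : t * ⟪f, m⟫_ℂ = -((a:ℂ)+1) * Complex.I := div_mul_cancel₀ _ hc
      rw [htc] at h0
      have : (⟪f, g⟫_ℂ + -((a:ℂ)+1) * Complex.I).im = a + (-(a+1)) := by
        simp [Complex.add_im, Complex.mul_im]
        linarith [ha]
      rw [this] at h0
      linarith
    rw [← inner_conj_symm, hc, map_zero]
  refine ⟨?_, ?_⟩
  · rintro f ⟨g, hg⟩ m hm
    exact key f g hg m hm
  intro hmax
  set domS : Submodule ℂ H := L.map (LinearMap.fst ℂ H H) with hdomS
  set mulS : Submodule ℂ H := L.comap (LinearMap.inr ℂ H H) with hmulS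
  have hdomset : {f : H | ∃ g : H, (f, g) ∈ L} = (domS : Set H) := by
    ext x
    constructor
    · rintro ⟨g, hg⟩
      exact ⟨(x, g), hg, rfl⟩
    · rintro ⟨⟨f, g⟩, hp, rfl⟩
      exact ⟨g, hp⟩
  have hmulmem : ∀ m : H, m ∈ mulS ↔ ((0:H), m) ∈ L := by
    intro m; rfl
  have hmulset : {x : H | ∀ m : H, ((0:H), m) ∈ L → ⟪m, x⟫_ℂ = 0} = ((mulSᗮ) : Set H) := by
    ext x
    constructor
    · intro hx
      rw [SetLike.mem_coe, Submodule.mem_orthogonal]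
      intro u hu
      exact hx u ((hmulmem u).1 hu)
    · intro hx m hm
      exact (Submodule.mem_orthogonal mulS x).1 hx m ((hmulmem m).2 hm)
  set K : Submodule ℂ H := domS.topologicalClosure with hK
  haveI : CompleteSpace K := (Submodule.isClosed_topologicalClosure domS).completeSpace_coe
  have hdomle : domS ≤ mulSᗮ := by
    rintro x ⟨p, hp, he⟩
    rw [Submodule.mem_orthogonal]
    intro u hu
    rw [← he]
    exact key p.1 p.2 hp u ((hmulmem u).1 hu)
  have hKle : K ≤ mulSᗮ :=
    Submodule.topologicalClosure_minimal domS hdomle mulS.isClosed_orthogonal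
  have hperp : ∀ z : H, z ∈ Kᗮ → z ∈ mulS := by
    intro z hz
    obtain ⟨p, hp, hpe⟩ := hmax (-Complex.I) (by simp) z
    have hz' : p.2 + Complex.I • p.1 = z := by
      rw [← hpe]; ring_nf; rw [neg_smul, sub_neg_eq_add]
    have hf : p.1 ∈ K := Submodule.le_topologicalClosure _ ⟨p, hp, rfl⟩
    have hfx : ⟪p.1, z⟫_ℂ = 0 := (Submodule.mem_orthogonal K z).1 hz p.1 hf
    have him : (⟪p.1, z⟫_ℂ).im = (⟪p.1, p.2⟫_ℂ).im + ‖p.1‖^2 := by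
      rw [← hz', inner_add_right, inner_smul_right]
      have hsq : ⟪p.1, p.1⟫_ℂ = ((‖p.1‖ : ℂ))^2 := inner_self_eq_norm_sq_to_K p.1
      rw [hsq]
      simp [Complex.add_im, Complex.mul_im]
      rw [← Complex.ofReal_pow, Complex.ofReal_re]
    rw [hfx] at him
    simp only [Complex.zero_im] at him
    have hge := hdiss p hp
    have hnorm : ‖p.1‖^2 = 0 := by nlinarith [sq_nonneg ‖p.1‖]
    have hp1 : p.1 = 0 := by
      have := pow_eq_zero_iff (n := 2) (by norm_num) |>.1 hnorm
      exact norm_eq_zero.1 this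
    have hz2 : p.2 = z := by rw [← hz', hp1]; simp
    rw [hmulmem]
    have : ((0:H), z) = p := by rw [Prod.ext_iff]; exact ⟨hp1.symm, hz2.symm⟩
    rw [this]; exact hp
  rw [hdomset, hmulset]
  have hfinal : K = mulSᗮ := by
    apply le_antisymm hKle
    intro x hx
    set y := (Submodule.orthogonalProjectionOnto K x : H) with hy
    have hyK : y ∈ K := (Submodule.orthogonalProjectionOnto K x).2
    have hzperp : x - y ∈ Kᗮ := Submodule.sub_starProjection_mem_orthogonal (K := K) x
    have hzmul : x - y ∈ mulS := hperp _ hzperp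
    have hzmulperp : x - y ∈ mulSᗮ := Submodule.sub_mem _ hx (hKle hyK)
    have hz0 : x - y = 0 := by
      have := (Submodule.mem_orthogonal mulS (x - y)).1 hzmulperp (x - y) hzmul
      exact inner_self_eq_zero.1 this
    have : x = y := by rwa [sub_eq_zero] at hz0
    rw [this]; exact hyK
  rw [← hfinal, hK, Submodule.topologicalClosure_coe]
end

section
/- Let ζ be a complex number with |ζ| = 1 and Im ζ > 0. A linear relation L is dissipative if and only if its Z-transform V = Z_ζ(L) = {(g - ζ̄f, ζ̄(g - ζf)) : (f,g) ∈ L} is a contraction, i.e., ‖ζ̄(g - ζf)‖ ≤ ‖g - ζ̄f‖ for all (f,g) ∈ L. -/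
open scoped InnerProductSpace

lemma stmt_15_key {H : Type*} [NormedAddCommGroup H] [InnerProductSpace ℂ H]
    (ζ : ℂ) (hζ : ‖ζ‖ = 1) (f g : H) :
    ‖g - (starRingEnd ℂ) ζ • f‖ ^ 2 - ‖(starRingEnd ℂ) ζ • g - f‖ ^ 2
      = 4 * ζ.im * (⟪f, g⟫_ℂ).im := by
  have h1 := @norm_sub_sq ℂ _ _ _ _ g ((starRingEnd ℂ) ζ • f)
  have h2 := @norm_sub_sq ℂ _ _ _ _ ((starRingEnd ℂ) ζ • g) f
  have hcf : ⟪g, f⟫_ℂ = (starRingEnd ℂ) ⟪f, g⟫_ℂ := (inner_conj_symm g f).symm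
  simp only [inner_smul_right, inner_smul_left, norm_smul, RingHom.id_apply,
    RCLike.star_def, starRingEnd_self_apply, hcf] at h1 h2
  rw [h1, h2]
  have hnζ : ‖(starRingEnd ℂ) ζ‖ = 1 := by rw [RCLike.norm_conj]; exact hζ
  rw [hnζ]
  simp only [Complex.mul_re, Complex.conj_re, Complex.conj_im, RCLike.re_to_complex]
  ring

/-- Let `|ζ| = 1` with `Im ζ > 0`.  A linear relation `L` is
dissipative if and only if its Z-transform
`Z_ζ(L) = {(g - ζ̄ f, ζ̄ g - f) : (f,g) ∈ L}` is a contraction, i.e.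
`‖ζ̄ g - f‖ ≤ ‖g - ζ̄ f‖` for all `(f, g) ∈ L`. -/
theorem stmt_15 {H : Type*} [NormedAddCommGroup H] [InnerProductSpace ℂ H] [CompleteSpace H]
    (L : Submodule ℂ (H × H)) (ζ : ℂ) (hζ : ‖ζ‖ = 1) (him : 0 < ζ.im) :
    (∀ p ∈ (L : Set (H × H)), 0 ≤ (⟪p.1, p.2⟫_ℂ).im) ↔
      (∀ p ∈ (L : Set (H × H)),
        ‖(starRingEnd ℂ) ζ • p.2 - p.1‖ ≤ ‖p.2 - (starRingEnd ℂ) ζ • p.1‖) := by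
  constructor
  · intro h p hp
    have hi := h p hp
    have hk := stmt_15_key ζ hζ p.1 p.2
    have hsq : ‖(starRingEnd ℂ) ζ • p.2 - p.1‖ ^ 2 ≤ ‖p.2 - (starRingEnd ℂ) ζ • p.1‖ ^ 2 := by
      nlinarith [mul_nonneg (le_of_lt him) hi]
    calc ‖(starRingEnd ℂ) ζ • p.2 - p.1‖
        = Real.sqrt (‖(starRingEnd ℂ) ζ • p.2 - p.1‖ ^ 2) := by
          rw [Real.sqrt_sq (norm_nonneg _)]
      _ ≤ Real.sqrt (‖p.2 - (starRingEnd ℂ) ζ • p.1‖ ^ 2) := Real.sqrt_le_sqrt hsq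
      _ = ‖p.2 - (starRingEnd ℂ) ζ • p.1‖ := Real.sqrt_sq (norm_nonneg _)
  · intro h p hp
    have hn := h p hp
    have hk := stmt_15_key ζ hζ p.1 p.2
    have hsq : ‖(starRingEnd ℂ) ζ • p.2 - p.1‖ ^ 2 ≤ ‖p.2 - (starRingEnd ℂ) ζ • p.1‖ ^ 2 :=
      pow_le_pow_left₀ (norm_nonneg _) hn 2
    nlinarith [him]
end

section
/- Let L be a maximal dissipative linear relation. Then the regular set and the quasi-regular set of L agree on the closed lower half-plane: for ζ with Im ζ ≤ 0, (L - ζI)^{-1} is bounded if and only if (L - ζI)^{-1} is a bounded operator defined on all of H (i.e., ran(L - ζI) = H). -/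
open scoped InnerProductSpace

/-- Let `L` be a maximal dissipative linear relation.  Then for
`ζ` in the closed lower half-plane, `(L - ζI)⁻¹` is bounded if and only if it
is a bounded operator defined on all of `H`, i.e. it is bounded and
`ran (L - ζI) = H`. -/
theorem stmt_19 {H : Type*} [NormedAddCommGroup H] [InnerProductSpace ℂ H] [CompleteSpace H]
    (L : Submodule ℂ (H × H)) (hclosed : IsClosed (L : Set (H × H)))
    (hdiss : ∀ p ∈ (L : Set (H × H)), 0 ≤ (⟪p.1, p.2⟫_ℂ).im)
    (hmax : ∀ ξ : ℂ, ξ.im < 0 → ∀ k : H, ∃ p ∈ (L : Set (H × H)), p.2 - ξ • p.1 = k)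
    (ζ : ℂ) (hζ : ζ.im ≤ 0) :
    (∃ C > (0 : ℝ), ∀ p ∈ (L : Set (H × H)), ‖p.1‖ ≤ C * ‖p.2 - ζ • p.1‖) ↔
      ((∃ C > (0 : ℝ), ∀ p ∈ (L : Set (H × H)), ‖p.1‖ ≤ C * ‖p.2 - ζ • p.1‖) ∧
        ∀ k : H, ∃ p ∈ (L : Set (H × H)), p.2 - ζ • p.1 = k) := by
  constructor
  · rintro ⟨C, hC, hb⟩
    refine ⟨⟨C, hC, hb⟩, ?_⟩
    -- The map `T p = p.2 - ζ • p.1` and its range `S` on `L`.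
    set T : (H × H) →ₗ[ℂ] H := LinearMap.snd ℂ H H - ζ • LinearMap.fst ℂ H H with hT
    have hTapp : ∀ p : H × H, T p = p.2 - ζ • p.1 := fun p => rfl
    set S : Submodule ℂ H := L.map T with hS
    -- S is closed
    have hSclosed : IsClosed (S : Set H) := by
      apply IsSeqClosed.isClosed
      intro x k hx hlim
      choose p hpL hpT using fun n => Submodule.mem_map.mp (hx n)
      have hx1 : CauchySeq fun n => (p n).1 := by
        have hxc : CauchySeq x := hlim.cauchySeq
        rw [Metric.cauchySeq_iff] at hxc ⊢
        intro δ hδ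
        obtain ⟨N, hN⟩ := hxc (δ / C) (by positivity)
        refine ⟨N, fun m hm n hn => ?_⟩
        have hsub : ((p m).1 - (p n).1, (p m).2 - (p n).2) ∈ (L : Set (H × H)) :=
          L.sub_mem (hpL m) (hpL n)
        have h1 := hb _ hsub
        have h2 : ((p m).2 - (p n).2) - ζ • ((p m).1 - (p n).1) = x m - x n := by
          rw [← hpT m, ← hpT n, hTapp, hTapp, smul_sub]
          abel
        rw [h2] at h1
        have h3 : ‖x m - x n‖ < δ / C := by
          rw [← dist_eq_norm]; exact hN m hm n hn
        have h4 : C * ‖x m - x n‖ < C * (δ / C) := by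
          exact mul_lt_mul_of_pos_left h3 hC
        rw [dist_eq_norm]
        calc ‖(p m).1 - (p n).1‖ ≤ C * ‖x m - x n‖ := h1
          _ < C * (δ / C) := h4
          _ = δ := by field_simp
      obtain ⟨a, ha⟩ := cauchySeq_tendsto_of_complete hx1
      have hp2 : ∀ n, (p n).2 = x n + ζ • (p n).1 := by
        intro n
        have := hpT n
        rw [hTapp] at this
        rw [← this]; abel
      have h2lim : Filter.Tendsto (fun n => (p n).2) Filter.atTop (nhds (k + ζ • a)) := by
        have : Filter.Tendsto (fun n => x n + ζ • (p n).1) Filter.atTop (nhds (k + ζ • a)) :=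
          hlim.add (ha.const_smul ζ)
        exact this.congr fun n => (hp2 n).symm
      have hpair : Filter.Tendsto (fun n => p n) Filter.atTop (nhds (a, k + ζ • a)) := by
        rw [Prod.tendsto_iff]
        exact ⟨ha, h2lim⟩
      have hmem : (a, k + ζ • a) ∈ (L : Set (H × H)) :=
        hclosed.mem_of_tendsto hpair (Filter.Eventually.of_forall hpL)
      refine Submodule.mem_map.mpr ⟨(a, k + ζ • a), hmem, ?_⟩
      rw [hTapp]
      simp
    -- Sᗮ = ⊥
    have horth : Sᗮ = ⊥ := by
      rw [Submodule.eq_bot_iff]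
      intro k hk
      by_contra hk0
      have hknorm : 0 < ‖k‖ := norm_pos_iff.mpr hk0
      set ε : ℝ := 1 / (4 * C) with hε'
      have hε : 0 < ε := by positivity
      have hεC : C * ε = 1 / 4 := by rw [hε']; field_simp
      set ξ : ℂ := ζ - (ε : ℂ) * Complex.I with hξ'
      have hξ : ξ.im < 0 := by
        simp only [hξ', Complex.sub_im, Complex.mul_im, Complex.ofReal_re, Complex.I_im,
          Complex.ofReal_im, Complex.I_re]
        simp only [mul_one, mul_zero, add_zero]
        linarith
      obtain ⟨p, hpL, hpk⟩ := hmax ξ hξ k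
      have hkey : p.2 - ζ • p.1 = k - ((ε : ℂ) * Complex.I) • p.1 := by
        rw [← hpk, hξ', sub_smul]
        abel
      have hnormc : ‖(ε : ℂ) * Complex.I‖ = ε := by
        simp [abs_of_pos hε]
      have hp1 : ‖p.1‖ ≤ 4 / 3 * C * ‖k‖ := by
        have h1 := hb p hpL
        rw [hkey] at h1
        have h2 : ‖k - ((ε : ℂ) * Complex.I) • p.1‖ ≤ ‖k‖ + ε * ‖p.1‖ := by
          calc ‖k - ((ε : ℂ) * Complex.I) • p.1‖ ≤ ‖k‖ + ‖((ε : ℂ) * Complex.I) • p.1‖ :=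
                norm_sub_le _ _
            _ = ‖k‖ + ε * ‖p.1‖ := by rw [norm_smul, hnormc]
        have h3 : ‖p.1‖ ≤ C * (‖k‖ + ε * ‖p.1‖) :=
          le_trans h1 (mul_le_mul_of_nonneg_left h2 hC.le)
        nlinarith [norm_nonneg p.1, norm_nonneg k]
      have hvS : p.2 - ζ • p.1 ∈ S := Submodule.mem_map.mpr ⟨p, hpL, (hTapp p)⟩
      have hinner : ⟪k, p.2 - ζ • p.1⟫_ℂ = 0 :=
        (Submodule.mem_orthogonal' S k).mp hk _ hvS
      rw [hkey, inner_sub_right, inner_smul_right] at hinner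
      have hksq : (⟪k, k⟫_ℂ) = ((ε : ℂ) * Complex.I) * ⟪k, p.1⟫_ℂ := by
        linear_combination hinner
      have hnorm1 : ‖k‖ ^ 2 ≤ ε * (‖k‖ * ‖p.1‖) := by
        have h1 : ‖(⟪k, k⟫_ℂ)‖ = ‖k‖ ^ 2 := by
          rw [inner_self_eq_norm_sq_to_K]
          simp [sq_abs]
        have h2 : ‖((ε : ℂ) * Complex.I) * ⟪k, p.1⟫_ℂ‖ ≤ ε * (‖k‖ * ‖p.1‖) := by
          rw [norm_mul, hnormc]
          exact mul_le_mul_of_nonneg_left (norm_inner_le_norm k p.1) hε.le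
        calc ‖k‖ ^ 2 = ‖(⟪k, k⟫_ℂ)‖ := h1.symm
          _ = ‖((ε : ℂ) * Complex.I) * ⟪k, p.1⟫_ℂ‖ := by rw [hksq]
          _ ≤ ε * (‖k‖ * ‖p.1‖) := h2
      have hfinal : ‖k‖ ^ 2 ≤ 1 / 3 * ‖k‖ ^ 2 := by
        calc ‖k‖ ^ 2 ≤ ε * (‖k‖ * ‖p.1‖) := hnorm1
          _ ≤ ε * (‖k‖ * (4 / 3 * C * ‖k‖)) := by
              apply mul_le_mul_of_nonneg_left _ hε.le
              exact mul_le_mul_of_nonneg_left hp1 (norm_nonneg k)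
          _ = (ε * C) * (4 / 3) * ‖k‖ ^ 2 := by ring
          _ = 1 / 3 * ‖k‖ ^ 2 := by rw [mul_comm ε C, hεC]; ring
      nlinarith
    -- conclude S = ⊤
    have hStop : S = ⊤ := by
      haveI : CompleteSpace S := hSclosed.completeSpace_coe
      rwa [Submodule.orthogonal_eq_bot_iff] at horth
    intro k
    have hk : k ∈ S := hStop ▸ Submodule.mem_top
    obtain ⟨p, hpL, hpT⟩ := Submodule.mem_map.mp hk
    exact ⟨p, hpL, by rw [← hTapp p]; exact hpT⟩
  · rintro ⟨h, -⟩
    exact h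
end
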